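/- Let ψ, φ ∈ D(T̂) with additionally T̂ψ, T̂φ ∈ L²(ℝ; ℂ) and ψ(p)/√|p| → 0 and φ(p)/√|p| → 0 as |p| → ∞. Then ∫_ℝ conj((T̂ψ)(p)) · φ(p) dp = ∫_ℝ conj(ψ(p)) · (T̂φ)(p) dp; i.e., the covariant time operator T̂ is a symmetric operator on its domain D(T̂) in L²(ℝ). -/

import Mathlib

open MeasureTheory Filter

/-- The covariant time operator `(T̂ψ)(p) = i·s·(ψ′(p)/p − ψ(p)/(2p²))` in momentum
representation (symmetric ordering `(s/2)(t̂ p̂⁻¹ + p̂⁻¹ t̂)`). -/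
noncomputable def timeOp (s : ℝ) (ψ : ℝ → ℂ) (p : ℝ) : ℂ :=
  Complex.I * (s : ℂ) * (deriv ψ p / (p : ℂ) - ψ p / (2 * (p : ℂ) ^ 2))

/-- The domain `D(T̂)` of the covariant time operator:  `ψ ∈ L²(ℝ)`, `ψ` differentiable
away from `0`, `ψ(p)/√|p| → 0` as `p → 0`, and `∫ |p|⁻¹·|d/dp(ψ(p)/√|p|)|² dp < ∞`. -/
def MemDomTimeOp (ψ : ℝ → ℂ) : Prop :=
  MemLp ψ 2 (volume : Measure ℝ) ∧
  (∀ p : ℝ, p ≠ 0 → DifferentiableAt ℝ ψ p) ∧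
  Tendsto (fun p : ℝ => ψ p / (Real.sqrt |p| : ℂ)) (nhdsWithin 0 {(0 : ℝ)}ᶜ) (nhds 0) ∧
  Integrable (fun p : ℝ =>
    |p|⁻¹ * ‖deriv (fun q : ℝ => ψ q / (Real.sqrt |q| : ℂ)) p‖ ^ 2)

/-!
Write `u = ψ / √|p|` and `v = φ / √|p|`. Away from `0` one has `(i s u)' = sign p · √|p| · T̂ψ`,
so the boundary form `B = conj (i s u) · v` satisfies
`B' = sign p · (conj (T̂ψ) · φ - conj ψ · T̂φ)`. Both `u` and `v` vanish at `0` and at `±∞`,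
hence so does `B`, and integrating `B'` separately over `(-∞, 0]` and `(0, ∞)` shows that the
integrable symmetry defect `conj (T̂ψ) · φ - conj ψ · T̂φ` has integral zero.
-/

open Topology Set ComplexConjugate

theorem hasDerivAt_sqrt_abs {x : ℝ} (hx : x ≠ 0) :
    HasDerivAt (fun y => √|y|) (SignType.sign x / (2 * √|x|)) x :=
  (hasDerivAt_abs hx).sqrt (abs_ne_zero.mpr hx)

theorem hasDerivAt_div_sqrt_abs {ψ : ℝ → ℂ} {p : ℝ} (hp : p ≠ 0)
    (hψ : DifferentiableAt ℝ ψ p) :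
    HasDerivAt (fun q => ψ q / (√|q| : ℂ))
      (((SignType.sign p * √|p| : ℝ) : ℂ) * (deriv ψ p / p - ψ p / (2 * (p : ℂ) ^ 2))) p := by
  have hc : √|p| ≠ 0 := Real.sqrt_ne_zero'.mpr (abs_pos.mpr hp)
  refine (hψ.hasDerivAt.div (hasDerivAt_sqrt_abs hp).ofReal_comp
    (Complex.ofReal_ne_zero.mpr hc)).congr_deriv ?_
  have hσ : (SignType.sign p : ℝ) ^ 2 = 1 := by rcases hp.lt_or_gt with h | h <;> simp [h]
  have hpc : p = SignType.sign p * √|p| ^ 2 := by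
    rw [Real.sq_sqrt (abs_nonneg p), sign_mul_abs]
  -- with `p = σ c²` and `σ² = 1` the identity becomes a rational one in `σ` and `c`
  generalize (SignType.sign p : ℝ) = σ at *
  generalize √|p| = c at *
  subst hpc
  have hσc : (σ : ℂ) ^ 2 = 1 := by exact_mod_cast hσ
  have hc0 : (c : ℂ) ≠ 0 := by exact_mod_cast hc
  have hσ0 : (σ : ℂ) ≠ 0 := by rintro h; simp [h] at hσc
  push_cast
  field_simp
  linear_combination -ψ (σ * c ^ 2) * hσc

theorem integral_eq_zero_of_hasDerivAt_sign_smul {E : Type*} [NormedAddCommGroup E]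
    [NormedSpace ℝ E] [CompleteSpace E] {F g : ℝ → E} {c : E}
    (hderiv : ∀ x ≠ 0, HasDerivAt F ((SignType.sign x : ℝ) • g x) x) (hg : Integrable g)
    (hzero : Tendsto F (𝓝[≠] 0) (𝓝 c)) (hinf : Tendsto F (cocompact ℝ) (𝓝 c)) :
    ∫ x, g x = 0 := by
  classical
  set F₀ := Function.update F 0 c
  have hcont : ContinuousAt F₀ 0 := continuousAt_update_same.mpr hzero
  have hderiv₀ : ∀ x ≠ 0, HasDerivAt F₀ ((SignType.sign x : ℝ) • g x) x := fun x hx =>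
    (hderiv x hx).congr_of_eventuallyEq <| by
      filter_upwards [eventually_ne_nhds hx] with y hy using Function.update_of_ne hy _ _
  have hinf₀ : Tendsto F₀ (cocompact ℝ) (𝓝 c) := hinf.congr'
    ((Function.update_eventuallyEq_cofinite F 0 c).filter_mono cocompact_le_cofinite).symm
  have hright : ∫ x in Ioi 0, g x = 0 := by
    have := integral_Ioi_of_hasDerivAt_of_tendsto hcont.continuousWithinAt
      (fun x hx => by simpa [mem_Ioi.mp hx] using hderiv₀ x (ne_of_gt hx)) hg.integrableOn
      (hinf₀.mono_left atTop_le_cocompact)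
    simpa [F₀] using this
  have hleft : ∫ x in Iic 0, g x = 0 := by
    have := integral_Iic_of_hasDerivAt_of_tendsto hcont.continuousWithinAt
      (fun x hx => by simpa [mem_Iio.mp hx] using hderiv₀ x (ne_of_lt hx)) hg.neg.integrableOn
      (hinf₀.mono_left atBot_le_cocompact)
    simpa [F₀, integral_neg] using this
  rw [← intervalIntegral.integral_Iic_add_Ioi hg.integrableOn hg.integrableOn, hleft, hright,
    add_zero]

theorem integrable_conj_mul {α : Type*} [MeasurableSpace α] {μ : Measure α} {f g : α → ℂ}
    (hf : MemLp f 2 μ) (hg : MemLp g 2 μ) :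
    Integrable (fun x => conj (f x) * g x) μ :=
  hf.star.integrable_mul hg

noncomputable def timeOpBoundaryForm (s : ℝ) (ψ φ : ℝ → ℂ) (p : ℝ) : ℂ :=
  conj (Complex.I * s * (ψ p / (√|p| : ℂ))) * (φ p / (√|p| : ℂ))

theorem hasDerivAt_timeOpBoundaryForm (s : ℝ) {ψ φ : ℝ → ℂ} {p : ℝ} (hp : p ≠ 0)
    (hψ : DifferentiableAt ℝ ψ p) (hφ : DifferentiableAt ℝ φ p) :
    HasDerivAt (timeOpBoundaryForm s ψ φ)
      ((SignType.sign p : ℝ) • (conj (timeOp s ψ p) * φ p - conj (ψ p) * timeOp s φ p)) p := by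
  have hψ' := ((hasDerivAt_div_sqrt_abs hp hψ).const_mul (Complex.I * s)).star
  refine (hψ'.mul (hasDerivAt_div_sqrt_abs hp hφ)).congr_deriv ?_
  have hc : ((√|p| : ℝ) : ℂ) ≠ 0 := by simpa using hp
  have hpc : (p : ℂ) ≠ 0 := by exact_mod_cast hp
  simp only [timeOp, Complex.star_def, Complex.real_smul, map_mul, map_sub, map_div₀, map_pow,
    map_ofNat, Complex.conj_ofReal, Complex.conj_I]
  push_cast
  field_simp
  ring

theorem tendsto_timeOpBoundaryForm (s : ℝ) {ψ φ : ℝ → ℂ} {l : Filter ℝ}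
    (hψ : Tendsto (fun p => ψ p / (√|p| : ℂ)) l (𝓝 0))
    (hφ : Tendsto (fun p => φ p / (√|p| : ℂ)) l (𝓝 0)) :
    Tendsto (timeOpBoundaryForm s ψ φ) l (𝓝 0) := by
  have h := ((hψ.const_mul (Complex.I * s)).star).mul hφ
  rw [mul_zero] at h
  exact h

theorem timeOp_symmetric_general
    (s : ℝ) (ψ φ : ℝ → ℂ)
    (hψdom : MemDomTimeOp ψ) (hφdom : MemDomTimeOp φ)
    (hψT2 : MemLp (timeOp s ψ) 2 (volume : Measure ℝ))
    (hφT2 : MemLp (timeOp s φ) 2 (volume : Measure ℝ))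
    (hψinf : Tendsto (fun p : ℝ => ψ p / (Real.sqrt |p| : ℂ)) (cocompact ℝ) (nhds 0))
    (hφinf : Tendsto (fun p : ℝ => φ p / (Real.sqrt |p| : ℂ)) (cocompact ℝ) (nhds 0)) :
    ∫ p : ℝ, starRingEnd ℂ (timeOp s ψ p) * φ p
      = ∫ p : ℝ, starRingEnd ℂ (ψ p) * timeOp s φ p := by
  obtain ⟨hψ2, hψdiff, hψ0, -⟩ := hψdom
  obtain ⟨hφ2, hφdiff, hφ0, -⟩ := hφdom
  have hTψφ := integrable_conj_mul hψT2 hφ2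
  have hψTφ := integrable_conj_mul hψ2 hφT2
  rw [← sub_eq_zero, ← integral_sub hTψφ hψTφ]
  exact integral_eq_zero_of_hasDerivAt_sign_smul
    (fun p hp => hasDerivAt_timeOpBoundaryForm s hp (hψdiff p hp) (hφdiff p hp))
    (hTψφ.sub hψTφ) (tendsto_timeOpBoundaryForm s hψ0 hφ0)
    (tendsto_timeOpBoundaryForm s hψinf hφinf)

/-- The covariant time operator `T̂` is a symmetric operator on its domain `D(T̂)` in
`L²(ℝ)`:  `⟨T̂ψ, φ⟩ = ⟨ψ, T̂φ⟩`. -/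
theorem timeOp_symmetric
    (s : ℝ) (hs : s = 1 ∨ s = -1) (ψ φ : ℝ → ℂ)
    (hψdom : MemDomTimeOp ψ) (hφdom : MemDomTimeOp φ)
    (hψT2 : MemLp (timeOp s ψ) 2 (volume : Measure ℝ))
    (hφT2 : MemLp (timeOp s φ) 2 (volume : Measure ℝ))
    (hψinf : Tendsto (fun p : ℝ => ψ p / (Real.sqrt |p| : ℂ)) (cocompact ℝ) (nhds 0))
    (hφinf : Tendsto (fun p : ℝ => φ p / (Real.sqrt |p| : ℂ)) (cocompact ℝ) (nhds 0)) :
    ∫ p : ℝ, starRingEnd ℂ (timeOp s ψ p) * φ p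
      = ∫ p : ℝ, starRingEnd ℂ (ψ p) * timeOp s φ p :=
  timeOp_symmetric_general s ψ φ hψdom hφdom hψT2 hφT2 hψinf hφinf
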